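/- arXiv:2510.14711 — 4 statements merged into one kernel-verified Lean document; each statement's English description precedes it below -/
import Mathlib

section
/- If two probability densities p and q on a set X are both everywhere positive and differentiable, and ν is a probability measure on X with full support such that the scores s_p = ∇log p and s_q = ∇log q are square-integrable with respect to ν, then the generalized Fisher divergence GFD_ν(p,q) := ∫ ‖s_p(x) − s_q(x)‖² dν(x) equals 0 if and only if p = q. -/
/-!
If the Fisher divergence vanishes, the integrand vanishes `ν`-a.e.; since the scores are
continuous (the densities are `C¹`) and `ν` charges every open set meeting `X`, the scores agree
everywhere on `X`. Then `log p - log q` has zero derivative on the connected open set `X`, so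
`p = c • q` there, and both being normalized forces `c = 1`.
-/

open MeasureTheory Set

section Gradient

variable {E : Type*} [NormedAddCommGroup E] [InnerProductSpace ℝ E] [CompleteSpace E]
  {s : Set E}

theorem ContDiffOn.continuousOn_of_hasGradientAt {f : E → ℝ} {f' : E → E} (hs : IsOpen s)
    (hf : ContDiffOn ℝ 1 f s) (hf' : ∀ x ∈ s, HasGradientAt f (f' x) x) : ContinuousOn f' s := by
  have hcont : ContinuousOn (fun x => (InnerProductSpace.toDual ℝ E).symm (fderiv ℝ f x)) s :=
    (InnerProductSpace.toDual ℝ E).symm.continuous.comp_continuousOn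
      (hf.continuousOn_fderiv_of_isOpen hs le_rfl)
  refine hcont.congr fun x hx => ?_
  simp [(hf' x hx).hasFDerivAt.fderiv]

theorem IsOpen.eqOn_of_hasGradientAt_of_eqOn {f g : E → ℝ} {f' g' : E → E} (hs : IsOpen s)
    (hfg : EqOn f g s) (hf : ∀ x ∈ s, HasGradientAt f (f' x) x)
    (hg : ∀ x ∈ s, HasGradientAt g (g' x) x) : EqOn f' g' s := fun x hx =>
  (hf x hx).unique <| (hg x hx).congr_of_eventuallyEq <|
    Filter.eventuallyEq_of_mem (hs.mem_nhds hx) hfg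

theorem IsOpen.exists_eqOn_const_mul_of_hasGradientAt_log {p q : E → ℝ} {g : E → E}
    (hs : IsOpen s) (hs' : IsPreconnected s) (hp : ∀ x ∈ s, 0 < p x) (hq : ∀ x ∈ s, 0 < q x)
    (hpg : ∀ x ∈ s, HasGradientAt (fun y => Real.log (p y)) (g x) x)
    (hqg : ∀ x ∈ s, HasGradientAt (fun y => Real.log (q y)) (g x) x) :
    ∃ c, EqOn p (fun x => c * q x) s := by
  obtain ⟨a, ha⟩ := hs.exists_eq_add_of_fderiv_eq hs'
    (fun x hx => (hpg x hx).differentiableAt.differentiableWithinAt)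
    (fun x hx => (hqg x hx).differentiableAt.differentiableWithinAt)
    (fun x hx => by rw [(hpg x hx).hasFDerivAt.fderiv, (hqg x hx).hasFDerivAt.fderiv])
  refine ⟨Real.exp a, fun x hx => ?_⟩
  have hlog : Real.log (p x) = Real.log (q x) + a := ha hx
  calc p x = Real.exp (Real.log (q x) + a) := by rw [← hlog, Real.exp_log (hp x hx)]
    _ = Real.exp a * q x := by rw [Real.exp_add, Real.exp_log (hq x hx), mul_comm]

end Gradient

theorem eqOn_of_eqOn_const_mul_of_setIntegral_eq_one {α : Type*} [MeasurableSpace α]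
    {μ : Measure α} {s : Set α} (hs : MeasurableSet s) {p q : α → ℝ} {c : ℝ}
    (hpq : EqOn p (fun x => c * q x) s) (hp : ∫ x in s, p x ∂μ = 1)
    (hq : ∫ x in s, q x ∂μ = 1) : EqOn p q s := by
  have hc : c = 1 := by
    rw [← hp, setIntegral_congr_fun hs hpq, integral_const_mul, hq, mul_one]
  simpa [hc] using hpq

theorem eqOn_of_ae_eq_of_forall_isOpen_pos {α β : Type*} [TopologicalSpace α]
    [MeasurableSpace α] [TopologicalSpace β] [T2Space β] {μ : Measure α} {s : Set α}
    (hs : IsOpen s) (hμ : ∀ U, IsOpen U → (U ∩ s).Nonempty → 0 < μ U) {f g : α → β}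
    (hfg : f =ᵐ[μ] g) (hf : ContinuousOn f s) (hg : ContinuousOn g s) : EqOn f g s := by
  intro x hx
  by_contra hne
  set U := s ∩ (fun y => (f y, g y)) ⁻¹' (diagonal β)ᶜ
  have hU : IsOpen U := (hf.prodMk hg).isOpen_inter_preimage hs isClosed_diagonal.isOpen_compl
  have hUnull : μ U = 0 := measure_mono_null (fun y hy => hy.2) (ae_iff.1 hfg)
  exact (hμ U hU ⟨x, ⟨hx, hne⟩, hx⟩).ne' hUnull

/-- The generalized Fisher divergence `GFD_ν(p,q) = ∫ ‖s_p - s_q‖² dν`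
between two strictly positive, differentiable probability densities on an open
connected set `X`, with `ν` a probability measure of full support on `X` and
square-integrable scores, vanishes iff `p = q` on `X`. -/
theorem stmt_0 {d : ℕ}
    (X : Set (EuclideanSpace ℝ (Fin d))) (hXo : IsOpen X) (hXc : IsConnected X)
    (p q : EuclideanSpace ℝ (Fin d) → ℝ)
    (sp sq : EuclideanSpace ℝ (Fin d) → EuclideanSpace ℝ (Fin d))
    (hp_pos : ∀ x ∈ X, 0 < p x) (hq_pos : ∀ x ∈ X, 0 < q x)
    (hp_diff : ContDiffOn ℝ 1 p X) (hq_diff : ContDiffOn ℝ 1 q X)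
    (hsp : ∀ x ∈ X, HasGradientAt (fun y => Real.log (p y)) (sp x) x)
    (hsq : ∀ x ∈ X, HasGradientAt (fun y => Real.log (q y)) (sq x) x)
    (hp_norm : ∫ x in X, p x = 1) (hq_norm : ∫ x in X, q x = 1)
    (ν : Measure (EuclideanSpace ℝ (Fin d))) [IsProbabilityMeasure ν]
    (hν_supp : ∀ U : Set (EuclideanSpace ℝ (Fin d)), IsOpen U → (U ∩ X).Nonempty → 0 < ν U)
    (hνX : ν X = 1)
    (hsp_int : Integrable (fun x => ‖sp x‖ ^ 2) ν)
    (hsq_int : Integrable (fun x => ‖sq x‖ ^ 2) ν) :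
    (∫ x, ‖sp x - sq x‖ ^ 2 ∂ν) = 0 ↔ Set.EqOn p q X := by
  have hν_ae : ∀ᵐ x ∂ν, x ∈ X := mem_ae_iff.2 ((prob_compl_eq_zero_iff hXo.measurableSet).2 hνX)
  have hsp_cont := (hp_diff.log fun x hx => (hp_pos x hx).ne').continuousOn_of_hasGradientAt hXo hsp
  have hsq_cont := (hq_diff.log fun x hx => (hq_pos x hx).ne').continuousOn_of_hasGradientAt hXo hsq
  have hmemLp {s : EuclideanSpace ℝ (Fin d) → EuclideanSpace ℝ (Fin d)} (hs : ContinuousOn s X)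
      (hs_int : Integrable (fun x => ‖s x‖ ^ 2) ν) : MemLp s 2 ν := by
    refine (memLp_two_iff_integrable_sq_norm ?_).2 hs_int
    simpa [Measure.restrict_eq_self_of_ae_mem hν_ae] using
      hs.aestronglyMeasurable (μ := ν) hXo.measurableSet
  have hint : Integrable (fun x => ‖sp x - sq x‖ ^ 2) ν :=
    ((hmemLp hsp_cont hsp_int).sub (hmemLp hsq_cont hsq_int)).integrable_norm_pow two_ne_zero
  rw [integral_eq_zero_iff_of_nonneg (fun _ => by positivity) hint]
  constructor
  · intro h
    have hspq_ae : sp =ᵐ[ν] sq := by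
      filter_upwards [h] with x hx
      simpa [sub_eq_zero] using hx
    have hspq := eqOn_of_ae_eq_of_forall_isOpen_pos hXo hν_supp hspq_ae hsp_cont hsq_cont
    obtain ⟨c, hc⟩ := hXo.exists_eqOn_const_mul_of_hasGradientAt_log hXc.isPreconnected hp_pos
      hq_pos hsp fun x hx => hspq hx ▸ hsq x hx
    exact eqOn_of_eqOn_const_mul_of_setIntegral_eq_one hXo.measurableSet hc hp_norm hq_norm
  · intro hpq
    have hspq := hXo.eqOn_of_hasGradientAt_of_eqOn (fun x hx => by simp only [hpq hx]) hsp hsq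
    filter_upwards [hν_ae] with x hx
    simp [hspq hx]
end

section
/- The square root of the generalized Fisher divergence, (p,q) ↦ √(GFD_ν(p,q)) = ‖s_p − s_q‖_{L²(ν)}, defines a metric on the set of strictly positive differentiable probability densities with ν-square-integrable scores, when ν has full support. -/
open MeasureTheory

/-- A strictly positive, continuously differentiable probability density on `X`
with score (gradient of log-density) square-integrable with respect to `ν`. -/
structure GFDDensity (d : ℕ) (X : Set (EuclideanSpace ℝ (Fin d)))
    (ν : Measure (EuclideanSpace ℝ (Fin d))) where
  toFun : EuclideanSpace ℝ (Fin d) → ℝ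
  score : EuclideanSpace ℝ (Fin d) → EuclideanSpace ℝ (Fin d)
  pos : ∀ x ∈ X, 0 < toFun x
  contDiff : ContDiffOn ℝ 1 toFun X
  score_grad : ∀ x ∈ X, HasGradientAt (fun y => Real.log (toFun y)) (score x) x
  normalized : ∫ x in X, toFun x = 1
  score_sq_int : Integrable (fun x => ‖score x‖ ^ 2) ν

/-!
The scores are continuous and square-integrable, so `f ↦ s_f` maps the densities into
`L²(ν)`, and `√GFD_ν(f, g)` is the `L²` distance between the images: nonnegativity, symmetry
and the triangle inequality are inherited from that metric space. The distance vanishes iff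
the scores agree `ν`-a.e., hence (continuity and full support) everywhere on `X`; then
`log f - log g` has zero derivative on the connected set `X`, so `f = c g` there, and the
normalization forces `c = 1`.
-/

lemma MeasureTheory.MemLp.norm_toLp_two_eq_sqrt_integral {α E : Type*} [MeasurableSpace α]
    {μ : Measure α} [NormedAddCommGroup E] {u : α → E} (hu : MemLp u 2 μ) :
    ‖hu.toLp u‖ = √(∫ x, ‖u x‖ ^ 2 ∂μ) := by
  rw [Lp.norm_toLp, hu.eLpNorm_eq_integral_rpow_norm two_ne_zero ENNReal.ofNat_ne_top,
    ENNReal.toReal_ofReal (by positivity), Real.sqrt_eq_rpow]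
  norm_num

lemma eqOn_of_ae_eq_of_continuousOn {α β : Type*} [TopologicalSpace α] [MeasurableSpace α]
    [TopologicalSpace β] [T2Space β] {μ : Measure α} {X : Set α} (hXo : IsOpen X)
    (hμ : ∀ U : Set α, IsOpen U → (U ∩ X).Nonempty → 0 < μ U) {u v : α → β}
    (hu : ContinuousOn u X) (hv : ContinuousOn v X) (h : u =ᵐ[μ] v) : Set.EqOn u v X := by
  set S := X ∩ (fun x => (u x, v x)) ⁻¹' (Set.diagonal β)ᶜ
  have hS : IsOpen S := (hu.prodMk hv).isOpen_inter_preimage hXo isClosed_diagonal.isOpen_compl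
  have hS_null : μ S = 0 := measure_mono_null (fun x hx => hx.2) (ae_iff.mp h)
  intro x hx
  by_contra hne
  exact (hμ S hS ⟨x, ⟨hx, hne⟩, hx⟩).ne' hS_null

namespace GFDDensity

variable {d : ℕ} {X : Set (EuclideanSpace ℝ (Fin d))} {ν : Measure (EuclideanSpace ℝ (Fin d))}

local notation "E" => EuclideanSpace ℝ (Fin d)

lemma score_eq_gradient (f : GFDDensity d X ν) {x : E} (hx : x ∈ X) :
    f.score x = gradient (fun y => Real.log (f.toFun y)) x :=
  (f.score_grad x hx).gradient.symm

lemma continuousOn_score (hXo : IsOpen X) (f : GFDDensity d X ν) : ContinuousOn f.score X := by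
  have hlog : ContDiffOn ℝ 1 (fun y => Real.log (f.toFun y)) X :=
    f.contDiff.log fun x hx => (f.pos x hx).ne'
  have hgrad : ContinuousOn (gradient (fun y => Real.log (f.toFun y))) X :=
    (InnerProductSpace.toDual ℝ E).symm.continuous.comp_continuousOn
      (hlog.continuousOn_fderiv_of_isOpen hXo le_rfl)
  exact hgrad.congr fun x hx => f.score_eq_gradient hx

lemma aestronglyMeasurable_score (hX : ∀ᵐ x ∂ν, x ∈ X) (f : GFDDensity d X ν) :
    AEStronglyMeasurable f.score ν := by
  have hgrad : Measurable (gradient (fun y => Real.log (f.toFun y))) :=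
    (InnerProductSpace.toDual ℝ E).symm.continuous.measurable.comp (measurable_fderiv ℝ _)
  refine hgrad.aestronglyMeasurable.congr ?_
  filter_upwards [hX] with x hx using (f.score_eq_gradient hx).symm

lemma memLp_score (hX : ∀ᵐ x ∂ν, x ∈ X) (f : GFDDensity d X ν) : MemLp f.score 2 ν :=
  (memLp_two_iff_integrable_sq_norm (f.aestronglyMeasurable_score hX)).mpr f.score_sq_int

noncomputable def scoreLp (hX : ∀ᵐ x ∂ν, x ∈ X) (f : GFDDensity d X ν) : Lp E 2 ν :=
  (f.memLp_score hX).toLp f.score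

lemma dist_scoreLp (hX : ∀ᵐ x ∂ν, x ∈ X) (f g : GFDDensity d X ν) :
    dist (f.scoreLp hX) (g.scoreLp hX) = √(∫ x, ‖f.score x - g.score x‖ ^ 2 ∂ν) := by
  rw [dist_eq_norm, scoreLp, scoreLp, ← MemLp.toLp_sub]
  exact MemLp.norm_toLp_two_eq_sqrt_integral _

lemma scoreLp_eq_scoreLp_iff (hX : ∀ᵐ x ∂ν, x ∈ X) (f g : GFDDensity d X ν) :
    f.scoreLp hX = g.scoreLp hX ↔ f.score =ᵐ[ν] g.score :=
  MemLp.toLp_eq_toLp_iff _ _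

lemma eqOn_score_of_eqOn (hXo : IsOpen X) {f g : GFDDensity d X ν}
    (h : Set.EqOn f.toFun g.toFun X) : Set.EqOn f.score g.score X := by
  intro x hx
  have hlog : (fun y => Real.log (g.toFun y)) =ᶠ[nhds x] fun y => Real.log (f.toFun y) := by
    filter_upwards [hXo.mem_nhds hx] with y hy
    rw [h hy]
  exact ((g.score_grad x hx).congr_of_eventuallyEq hlog.symm).unique (f.score_grad x hx) |>.symm

lemma eqOn_of_eqOn_score (hXo : IsOpen X) (hXc : IsPreconnected X) {f g : GFDDensity d X ν}
    (h : Set.EqOn f.score g.score X) : Set.EqOn f.toFun g.toFun X := by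
  have hdiff (f : GFDDensity d X ν) : DifferentiableOn ℝ (fun y => Real.log (f.toFun y)) X :=
    fun x hx => (f.score_grad x hx).differentiableAt.differentiableWithinAt
  obtain ⟨c, hc⟩ := hXo.exists_eq_add_of_fderiv_eq hXc (hdiff f) (hdiff g) fun x hx => by
    simp only [(f.score_grad x hx).hasFDerivAt.fderiv, (g.score_grad x hx).hasFDerivAt.fderiv,
      h hx]
  have hprop : Set.EqOn f.toFun (fun x => g.toFun x * Real.exp c) X := fun x hx => by
    rw [← Real.exp_log (f.pos x hx), show Real.log (f.toFun x) = _ from hc hx, Real.exp_add, Real.exp_log (g.pos x hx)]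
  have hexp : Real.exp c = 1 := by
    have := setIntegral_congr_fun (μ := volume) hXo.measurableSet hprop
    rwa [integral_mul_const, f.normalized, g.normalized, one_mul, eq_comm] at this
  intro x hx
  simpa [hexp] using hprop hx

end GFDDensity

open GFDDensity in
/-- `(p,q) ↦ √(GFD_ν(p,q)) = ‖s_p − s_q‖_{L²(ν)}` is a metric on the
set of strictly positive differentiable probability densities with
`ν`-square-integrable scores, when `ν` has full support: nonnegative, symmetric,
zero exactly on equal densities, and satisfying the triangle inequality. -/
theorem stmt_2 {d : ℕ}
    (X : Set (EuclideanSpace ℝ (Fin d))) (hXo : IsOpen X) (hXc : IsConnected X)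
    (ν : Measure (EuclideanSpace ℝ (Fin d))) [IsProbabilityMeasure ν]
    (hν_supp : ∀ U : Set (EuclideanSpace ℝ (Fin d)), IsOpen U → (U ∩ X).Nonempty → 0 < ν U)
    (hνX : ν X = 1)
    (D : GFDDensity d X ν → GFDDensity d X ν → ℝ)
    (hD : ∀ f g, D f g = Real.sqrt (∫ x, ‖f.score x - g.score x‖ ^ 2 ∂ν)) :
    (∀ f g, 0 ≤ D f g) ∧
    (∀ f g, D f g = D g f) ∧
    (∀ f g, D f g = 0 ↔ Set.EqOn f.toFun g.toFun X) ∧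
    (∀ f g h, D f h ≤ D f g + D g h) := by
  have hX : ∀ᵐ x ∂ν, x ∈ X :=
    (ae_mem_iff_measure_eq hXo.measurableSet.nullMeasurableSet).mpr (by rw [hνX, measure_univ])
  have hDdist : ∀ f g, D f g = dist (f.scoreLp hX) (g.scoreLp hX) := fun f g => by
    rw [hD, dist_scoreLp]
  simp only [hDdist]
  refine ⟨fun _ _ => dist_nonneg, fun _ _ => dist_comm _ _, fun f g => ?_,
    fun _ _ _ => dist_triangle _ _ _⟩
  rw [dist_eq_zero, scoreLp_eq_scoreLp_iff]
  constructor
  · intro hae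
    exact eqOn_of_eqOn_score hXo hXc.isPreconnected <|
      eqOn_of_ae_eq_of_continuousOn hXo hν_supp (f.continuousOn_score hXo)
        (g.continuousOn_score hXo) hae
  · intro heq
    filter_upwards [hX] with x hx using eqOn_score_of_eqOn hXo heq hx
end

section
/- For Markov kernels (conditional models) Q_{|z} with C¹ densities f_{Q_{|z}}, a C² real kernel l on 𝒴, and a real kernel k on 𝒵, the function k_{Q}((z,y),(z',y')) = k(z,z')·[ l(y,y') s_{Q_{|z}}(y)ᵀ s_{Q_{|z'}}(y') + s_{Q_{|z}}(y)ᵀ ∇_{y'} l(y,y') + s_{Q_{|z'}}(y')ᵀ ∇_y l(y,y') + ∑_{i} ∂²l(y,y')/∂y_i∂y'_i ] is a positive definite kernel on 𝒵 × 𝒴. -/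
/-!
For a direction `e`, let `l_e` be the kernel on `𝒴 × ℝ`
`((y, w), (y', w')) ↦ l w w' + w ∂₂l + w' ∂₁l + ∂₁∂₂l`, all derivatives of `l` taken in the
direction `e` at `(y, y')`.
Summed over the coordinate directions `eᵢ` and evaluated at the `i`-th coordinates of the scores,
these give the bracket in `k_Q`; so `k_Q` is the Schur product of `k` with a sum of pullbacks of
the `l_e`, and it suffices that each `l_e` is positive semidefinite and symmetric. Both properties
pass to pointwise limits, and `l_e` is the limit as `h → 0⁺` of the Gram kernel of `l` evaluated
on the finite combinations of point masses `(w - 1/h) δ_{y + h e} + (1/h) δ_{y + 2 h e}`: the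
first-order and mixed second-order difference quotients of the `C²` function `l` that appear
converge to the corresponding derivatives.
-/

open MeasureTheory

noncomputable section

/-- Gradient of the kernel `l` in its first argument. -/
def gradFst {dy : ℕ} (l : EuclideanSpace ℝ (Fin dy) → EuclideanSpace ℝ (Fin dy) → ℝ)
    (y y' : EuclideanSpace ℝ (Fin dy)) : EuclideanSpace ℝ (Fin dy) :=
  gradient (fun u => l u y') y

/-- Gradient of the kernel `l` in its second argument. -/
def gradSnd {dy : ℕ} (l : EuclideanSpace ℝ (Fin dy) → EuclideanSpace ℝ (Fin dy) → ℝ)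
    (y y' : EuclideanSpace ℝ (Fin dy)) : EuclideanSpace ℝ (Fin dy) :=
  gradient (fun v => l y v) y'

/-- The trace of mixed second partials `∑ᵢ ∂²l(y,y')/∂yᵢ∂y'ᵢ`. -/
def crossDeriv {dy : ℕ} (l : EuclideanSpace ℝ (Fin dy) → EuclideanSpace ℝ (Fin dy) → ℝ)
    (y y' : EuclideanSpace ℝ (Fin dy)) : ℝ :=
  ∑ i, fderiv ℝ (fun u => fderiv ℝ (fun v => l u v) y' (EuclideanSpace.single i 1)) y
    (EuclideanSpace.single i 1)

open Filter Topology Function Set Matrix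

def IsPosSemidefKernel {X : Type*} (K : X → X → ℝ) : Prop :=
  ∀ (n : ℕ) (x : Fin n → X) (c : Fin n → ℝ), 0 ≤ ∑ i, ∑ j, c i * c j * K (x i) (x j)

theorem star_dotProduct_mulVec_kernelMatrix {X : Type*} (K : X → X → ℝ) {n : ℕ} (x : Fin n → X)
    (c : Fin n → ℝ) :
    star c ⬝ᵥ (Matrix.of (fun i j => K (x i) (x j)) *ᵥ c)
      = ∑ i, ∑ j, c i * c j * K (x i) (x j) := by
  simp only [dotProduct, Matrix.mulVec, Matrix.of_apply, star_trivial, Finset.mul_sum]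
  exact Finset.sum_congr rfl fun _ _ => Finset.sum_congr rfl fun _ _ => by ring

namespace IsPosSemidefKernel

variable {X Y : Type*} {K K' : X → X → ℝ}

theorem sum_sum_nonneg (hK : IsPosSemidefKernel K) {ι : Type*} [Fintype ι] (x : ι → X)
    (c : ι → ℝ) : 0 ≤ ∑ i, ∑ j, c i * c j * K (x i) (x j) := by
  let e := (Fintype.equivFin ι).symm
  exact (hK _ (x ∘ e) (c ∘ e)).trans_eq
    (Fintype.sum_equiv e _ _ fun _ => Fintype.sum_equiv e _ _ fun _ => rfl)

theorem comap (hK : IsPosSemidefKernel K) (φ : Y → X) :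
    IsPosSemidefKernel fun y y' => K (φ y) (φ y') :=
  fun n y c => hK n (φ ∘ y) c

theorem sum {ι : Type*} (s : Finset ι) {K : ι → X → X → ℝ}
    (hK : ∀ i ∈ s, IsPosSemidefKernel (K i)) :
    IsPosSemidefKernel fun x y => ∑ i ∈ s, K i x y := by
  intro n x c
  have h : ∑ a, ∑ b, c a * c b * ∑ i ∈ s, K i (x a) (x b)
      = ∑ i ∈ s, ∑ a, ∑ b, c a * c b * K i (x a) (x b) := by
    simp only [Finset.mul_sum]
    exact (Finset.sum_congr rfl fun _ _ => Finset.sum_comm).trans Finset.sum_comm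
  exact h ▸ Finset.sum_nonneg fun i hi => hK i hi n x c

theorem linearCombination (hK : IsPosSemidefKernel K) {m : ℕ} (p : Y → Fin m → X)
    (a : Y → Fin m → ℝ) :
    IsPosSemidefKernel fun y y' => ∑ j, ∑ j', a y j * a y' j' * K (p y j) (p y' j') := by
  intro n y c
  convert hK.sum_sum_nonneg (fun q : Fin n × Fin m => p (y q.1) q.2)
    (fun q => c q.1 * a (y q.1) q.2) using 1
  simp only [Fintype.sum_prod_type, Finset.mul_sum]
  refine Finset.sum_congr rfl fun i _ => ?_
  rw [Finset.sum_comm]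
  refine Finset.sum_congr rfl fun i' _ => Finset.sum_congr rfl fun j _ =>
    Finset.sum_congr rfl fun j' _ => by ring

theorem of_tendsto {ι : Type*} {l : Filter ι} [l.NeBot] {F : ι → X → X → ℝ}
    (hF : ∀ᶠ t in l, IsPosSemidefKernel (F t))
    (hlim : ∀ x y, Tendsto (fun t => F t x y) l (𝓝 (K x y))) : IsPosSemidefKernel K :=
  fun n x c => ge_of_tendsto
    (tendsto_finsetSum _ fun _ _ => tendsto_finsetSum _ fun _ _ => (hlim _ _).const_mul _)
    (hF.mono fun _ ht => ht n x c)

theorem posSemidef_of (hK : IsPosSemidefKernel K) (hsymm : ∀ x y, K x y = K y x) {n : ℕ}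
    (x : Fin n → X) : (Matrix.of fun i j => K (x i) (x j)).PosSemidef :=
  .of_dotProduct_mulVec_nonneg (Matrix.IsHermitian.ext fun i j => by simp [hsymm])
    fun c => star_dotProduct_mulVec_kernelMatrix K x c ▸ hK n x c

theorem mul (hK : IsPosSemidefKernel K) (hK' : IsPosSemidefKernel K')
    (hsymm : ∀ x y, K x y = K y x) (hsymm' : ∀ x y, K' x y = K' y x) :
    IsPosSemidefKernel fun x y => K x y * K' x y := by
  intro n x c
  have h := ((hK.posSemidef_of hsymm x).hadamard
    (hK'.posSemidef_of hsymm' x)).dotProduct_mulVec_nonneg c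
  exact star_dotProduct_mulVec_kernelMatrix (fun x y => K x y * K' x y) x c ▸ h

end IsPosSemidefKernel

section Difference

variable {W : Type*} [NormedAddCommGroup W] [NormedSpace ℝ W] {f : W → ℝ} {x : W}

theorem HasFDerivAt.tendsto_sub_div {f' : W →L[ℝ] ℝ} (hf : HasFDerivAt f f' x) (u u' : W) :
    Tendsto (fun h : ℝ => (f (x + h • u) - f (x + h • u')) / h) (𝓝[≠] 0) (𝓝 (f' (u - u'))) := by
  have hline (v : W) : HasDerivAt (fun h : ℝ => f (x + h • v)) (f' v) 0 :=
    hf.comp_hasDerivAt_of_eq 0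
      (by simpa using ((hasDerivAt_id (0 : ℝ)).smul_const v).const_add x) (by simp)
  have h := (hasDerivAt_iff_tendsto_slope.mp (hline u)).sub
    (hasDerivAt_iff_tendsto_slope.mp (hline u'))
  rw [← map_sub] at h
  refine h.congr fun h => ?_
  simp only [slope_def_field, zero_smul, add_zero]
  ring

theorem tendsto_alternate_sum_square_div (hf : Differentiable ℝ f)
    (hf' : DifferentiableAt ℝ (fderiv ℝ f) x) (v w : W) :
    Tendsto (fun h : ℝ => (f (x + h • (2 • v + 2 • w)) + f (x + h • (v + w))
        - f (x + h • (2 • v + w)) - f (x + h • (v + 2 • w))) / h ^ 2)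
      (𝓝[>] 0) (𝓝 (fderiv ℝ (fderiv ℝ f) x v w)) := by
  have h := (convex_univ.isLittleO_alternate_sum_square (fun y _ => (hf y).hasFDerivAt)
    (f'' := fderiv ℝ (fderiv ℝ f) x) (mem_univ x) (by simpa using hf'.hasFDerivAt)
    (v := v) (w := w) (by simp) (by simp)).tendsto_div_nhds_zero
  have h2 := h.add_const (fderiv ℝ (fderiv ℝ f) x v w)
  rw [zero_add] at h2
  refine h2.congr' ?_
  filter_upwards [self_mem_nhdsWithin] with h (hh : 0 < h)
  field_simp
  simp

end Difference

section DirectionalStein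

variable {V : Type*} [NormedAddCommGroup V] [NormedSpace ℝ V]

def directionalSteinKernel (K : V → V → ℝ) (e : V) (p q : V × ℝ) : ℝ :=
  K p.1 q.1 * (p.2 * q.2) + p.2 * fderiv ℝ (uncurry K) (p.1, q.1) (0, e)
    + q.2 * fderiv ℝ (uncurry K) (p.1, q.1) (e, 0)
    + fderiv ℝ (fderiv ℝ (uncurry K)) (p.1, q.1) (e, 0) (0, e)

/- The atoms sit at `y + h e` and `y + 2 h e` rather than at `y` and `y + h e`, so that the
mixed second difference is the one of `Convex.isLittleO_alternate_sum_square`. -/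
def directionalSteinKernelApprox (K : V → V → ℝ) (e : V) (h : ℝ) (p q : V × ℝ) : ℝ :=
  ∑ j, ∑ j', ![p.2 - h⁻¹, h⁻¹] j * ![q.2 - h⁻¹, h⁻¹] j'
    * K (![p.1 + h • e, p.1 + (2 * h) • e] j) (![q.1 + h • e, q.1 + (2 * h) • e] j')

theorem directionalSteinKernelApprox_comm {K : V → V → ℝ} (hK : ∀ y y', K y y' = K y' y)
    (e : V) (h : ℝ) (p q : V × ℝ) :
    directionalSteinKernelApprox K e h p q = directionalSteinKernelApprox K e h q p := by
  unfold directionalSteinKernelApprox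
  rw [Finset.sum_comm]
  exact Finset.sum_congr rfl fun _ _ => Finset.sum_congr rfl fun _ _ => by rw [hK]; ring

theorem directionalSteinKernelApprox_eq (K : V → V → ℝ) (e : V) {h : ℝ} (hh : h ≠ 0)
    (p q : V × ℝ) :
    directionalSteinKernelApprox K e h p q =
      K (p.1 + h • e) (q.1 + h • e) * (p.2 * q.2)
      + p.2 * ((K (p.1 + h • e) (q.1 + (2 * h) • e) - K (p.1 + h • e) (q.1 + h • e)) / h)
      + q.2 * ((K (p.1 + (2 * h) • e) (q.1 + h • e) - K (p.1 + h • e) (q.1 + h • e)) / h)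
      + (K (p.1 + (2 * h) • e) (q.1 + (2 * h) • e) + K (p.1 + h • e) (q.1 + h • e)
        - K (p.1 + (2 * h) • e) (q.1 + h • e) - K (p.1 + h • e) (q.1 + (2 * h) • e)) / h ^ 2 := by
  simp only [directionalSteinKernelApprox, Fin.sum_univ_two, Matrix.cons_val_zero,
    Matrix.cons_val_one]
  field_simp
  ring

theorem tendsto_directionalSteinKernelApprox {K : V → V → ℝ} (hd : Differentiable ℝ (uncurry K))
    (e : V) (p q : V × ℝ) (hd2 : DifferentiableAt ℝ (fderiv ℝ (uncurry K)) (p.1, q.1)) :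
    Tendsto (fun h => directionalSteinKernelApprox K e h p q) (𝓝[>] 0)
      (𝓝 (directionalSteinKernel K e p q)) := by
  set f := uncurry K
  set x : V × V := (p.1, q.1)
  set v : V × V := (e, 0)
  set w : V × V := (0, e)
  have hA (h : ℝ) : K (p.1 + h • e) (q.1 + h • e) = f (x + h • (v + w)) := by
    show f (_, _) = _
    congr 1
    ext <;> simp [x, v, w]
  have hB (h : ℝ) : K (p.1 + h • e) (q.1 + (2 * h) • e) = f (x + h • (v + 2 • w)) := by
    show f (_, _) = _
    congr 1
    ext <;> simp [x, v, w, mul_smul, smul_comm h (2 : ℕ), ofNat_smul_eq_nsmul]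
  have hC (h : ℝ) : K (p.1 + (2 * h) • e) (q.1 + h • e) = f (x + h • (2 • v + w)) := by
    show f (_, _) = _
    congr 1
    ext <;> simp [x, v, w, mul_smul, smul_comm h (2 : ℕ), ofNat_smul_eq_nsmul]
  have hD (h : ℝ) : K (p.1 + (2 * h) • e) (q.1 + (2 * h) • e) = f (x + h • (2 • v + 2 • w)) := by
    show f (_, _) = _
    congr 1
    ext <;> simp [x, v, w, mul_smul, smul_comm h (2 : ℕ), ofNat_smul_eq_nsmul]
  have hpos : 𝓝[>] (0 : ℝ) ≤ 𝓝[≠] 0 := nhdsWithin_mono _ fun _ (h : 0 < _) => h.ne'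
  have lim_val : Tendsto (fun h : ℝ => f (x + h • (v + w))) (𝓝[>] 0) (𝓝 (f x)) := by
    have hline : Continuous fun h : ℝ => x + h • (v + w) := by fun_prop
    exact ((hd.continuous.tendsto x).comp (hline.tendsto' 0 x (by simp))).mono_left
      nhdsWithin_le_nhds
  have lim_snd := ((hd x).hasFDerivAt.tendsto_sub_div (v + 2 • w) (v + w)).mono_left hpos
  have lim_fst := ((hd x).hasFDerivAt.tendsto_sub_div (2 • v + w) (v + w)).mono_left hpos
  have lim_mixed := tendsto_alternate_sum_square_div hd hd2 v w
  rw [show v + 2 • w - (v + w) = w by module] at lim_snd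
  rw [show 2 • v + w - (v + w) = v by module] at lim_fst
  refine (((lim_val.mul_const (p.2 * q.2)).add (lim_snd.const_mul p.2)).add
    (lim_fst.const_mul q.2)).add lim_mixed |>.congr' ?_
  filter_upwards [self_mem_nhdsWithin] with h (hh : 0 < h)
  rw [directionalSteinKernelApprox_eq K e hh.ne', hA, hB, hC, hD]

theorem directionalSteinKernel_comm {K : V → V → ℝ} (hK : ∀ y y', K y y' = K y' y)
    (hd : Differentiable ℝ (uncurry K)) (hd2 : Differentiable ℝ (fderiv ℝ (uncurry K)))
    (e : V) (p q : V × ℝ) : directionalSteinKernel K e p q = directionalSteinKernel K e q p :=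
  tendsto_nhds_unique (tendsto_directionalSteinKernelApprox hd e p q (hd2 _)) <| by
    simpa only [directionalSteinKernelApprox_comm hK] using
      tendsto_directionalSteinKernelApprox hd e q p (hd2 _)

theorem IsPosSemidefKernel.directionalSteinKernel {K : V → V → ℝ} (hK : IsPosSemidefKernel K)
    (hd : Differentiable ℝ (uncurry K)) (hd2 : Differentiable ℝ (fderiv ℝ (uncurry K)))
    (e : V) : IsPosSemidefKernel (directionalSteinKernel K e) :=
  .of_tendsto (l := 𝓝[>] 0) (.of_forall fun _ => hK.linearCombination _ _)
    fun p q => tendsto_directionalSteinKernelApprox hd e p q (hd2 _)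

end DirectionalStein

section Partial

variable {V : Type*} [NormedAddCommGroup V] [NormedSpace ℝ V] {K : V → V → ℝ} {y y' : V}

theorem fderiv_apply_snd (hd : DifferentiableAt ℝ (uncurry K) (y, y')) (v : V) :
    fderiv ℝ (K y) y' v = fderiv ℝ (uncurry K) (y, y') (0, v) := by
  have h : HasFDerivAt (K y) ((fderiv ℝ (uncurry K) (y, y')).comp (.inr ℝ V V)) y' :=
    hd.hasFDerivAt.comp y' (hasFDerivAt_prodMk_right y y')
  rw [h.fderiv]
  rfl

theorem fderiv_apply_fst (hd : DifferentiableAt ℝ (uncurry K) (y, y')) (v : V) :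
    fderiv ℝ (fun u => K u y') y v = fderiv ℝ (uncurry K) (y, y') (v, 0) := by
  have h : HasFDerivAt (fun u => K u y') ((fderiv ℝ (uncurry K) (y, y')).comp (.inl ℝ V V)) y :=
    HasFDerivAt.comp (g := uncurry K) y hd.hasFDerivAt (hasFDerivAt_prodMk_left (𝕜 := ℝ) y y')
  rw [h.fderiv]
  rfl

theorem fderiv_fderiv_apply_fst_snd (hd : Differentiable ℝ (uncurry K))
    (hd2 : DifferentiableAt ℝ (fderiv ℝ (uncurry K)) (y, y')) (v w : V) :
    fderiv ℝ (fun u => fderiv ℝ (K u) y' w) y v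
      = fderiv ℝ (fderiv ℝ (uncurry K)) (y, y') (v, 0) (0, w) := by
  have h : HasFDerivAt (fun u => fderiv ℝ (uncurry K) (u, y') (0, w)) _ y :=
    HasFDerivAt.comp (g := fun q => fderiv ℝ (uncurry K) q (0, w)) y
    (hd2.hasFDerivAt.clm_apply (hasFDerivAt_const ((0 : V), w) _))
    (hasFDerivAt_prodMk_left (𝕜 := ℝ) y y')
  simp only [funext fun u => fderiv_apply_snd (hd (u, y')) w]
  rw [h.fderiv]
  simp

end Partial

section Euclidean

variable {ι : Type*} [Fintype ι] [DecidableEq ι]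

theorem ContinuousLinearMap.apply_eq_sum_single (T : EuclideanSpace ℝ ι →L[ℝ] ℝ)
    (w : EuclideanSpace ℝ ι) : T w = ∑ i, w i * T (EuclideanSpace.single i 1) := by
  conv_lhs => rw [← (EuclideanSpace.basisFun ι ℝ).sum_repr w]
  simp [map_sum]

end Euclidean

theorem steinKernel_eq_sum_directionalSteinKernel {dy : ℕ}
    {l : EuclideanSpace ℝ (Fin dy) → EuclideanSpace ℝ (Fin dy) → ℝ}
    (hd : Differentiable ℝ (uncurry l)) (hd2 : Differentiable ℝ (fderiv ℝ (uncurry l)))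
    (y y' w w' : EuclideanSpace ℝ (Fin dy)) :
    l y y' * inner ℝ w w' + inner ℝ w (gradSnd l y y') + inner ℝ w' (gradFst l y y')
        + crossDeriv l y y'
      = ∑ i, directionalSteinKernel l (EuclideanSpace.single i 1) (y, w i) (y', w' i) := by
  have h_inner : inner ℝ w w' = ∑ i, w i * w' i := by simp [PiLp.inner_apply, mul_comm]
  have h_snd : inner ℝ w (gradSnd l y y')
      = ∑ i, w i * fderiv ℝ (uncurry l) (y, y') (0, EuclideanSpace.single i 1) := by
    rw [gradSnd, inner_gradient_right, conj_trivial, ContinuousLinearMap.apply_eq_sum_single]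
    simp only [fderiv_apply_snd (hd (y, y'))]
  have h_fst : inner ℝ w' (gradFst l y y')
      = ∑ i, w' i * fderiv ℝ (uncurry l) (y, y') (EuclideanSpace.single i 1, 0) := by
    rw [gradFst, inner_gradient_right, conj_trivial, ContinuousLinearMap.apply_eq_sum_single]
    simp only [fderiv_apply_fst (hd (y, y'))]
  have h_cross : crossDeriv l y y' = ∑ i, fderiv ℝ (fderiv ℝ (uncurry l)) (y, y')
      (EuclideanSpace.single i 1, 0) (0, EuclideanSpace.single i 1) :=
    Finset.sum_congr rfl fun _ _ => fderiv_fderiv_apply_fst_snd hd (hd2 _) _ _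
  rw [h_inner, h_snd, h_fst, h_cross, Finset.mul_sum, ← Finset.sum_add_distrib,
    ← Finset.sum_add_distrib, ← Finset.sum_add_distrib]
  rfl

theorem stmt_11_general {dy : ℕ} {𝒵 : Type*}
    (k : 𝒵 → 𝒵 → ℝ) (hk_symm : ∀ z z', k z z' = k z' z)
    (hk_pd : ∀ (n : ℕ) (z : Fin n → 𝒵) (c : Fin n → ℝ),
      0 ≤ ∑ i, ∑ j, c i * c j * k (z i) (z j))
    (l : EuclideanSpace ℝ (Fin dy) → EuclideanSpace ℝ (Fin dy) → ℝ)
    (hl_smooth : ContDiff ℝ 2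
      (fun p : EuclideanSpace ℝ (Fin dy) × EuclideanSpace ℝ (Fin dy) => l p.1 p.2))
    (hl_symm : ∀ y y', l y y' = l y' y)
    (hl_pd : ∀ (n : ℕ) (y : Fin n → EuclideanSpace ℝ (Fin dy)) (c : Fin n → ℝ),
      0 ≤ ∑ i, ∑ j, c i * c j * l (y i) (y j))
    (s : 𝒵 → EuclideanSpace ℝ (Fin dy) → EuclideanSpace ℝ (Fin dy))
    (kQ : 𝒵 × EuclideanSpace ℝ (Fin dy) → 𝒵 × EuclideanSpace ℝ (Fin dy) → ℝ)
    (hkQ : ∀ z y z' y', kQ (z, y) (z', y') =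
      k z z' * (l y y' * inner ℝ (s z y) (s z' y')
        + inner ℝ (s z y) (gradSnd l y y')
        + inner ℝ (s z' y') (gradFst l y y')
        + crossDeriv l y y')) :
    (∀ u v, kQ u v = kQ v u) ∧
    (∀ (n : ℕ) (u : Fin n → 𝒵 × EuclideanSpace ℝ (Fin dy)) (c : Fin n → ℝ),
      0 ≤ ∑ i, ∑ j, c i * c j * kQ (u i) (u j)) := by
  have hd : Differentiable ℝ (uncurry l) := hl_smooth.differentiable two_ne_zero
  have hd2 : Differentiable ℝ (fderiv ℝ (uncurry l)) :=
    (hl_smooth.fderiv_right (m := 1) le_rfl).differentiable one_ne_zero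
  set S : 𝒵 × EuclideanSpace ℝ (Fin dy) → 𝒵 × EuclideanSpace ℝ (Fin dy) → ℝ := fun u v =>
    ∑ i, directionalSteinKernel l (EuclideanSpace.single i 1)
      (u.2, s u.1 u.2 i) (v.2, s v.1 v.2 i)
  have hkQ_eq (u v) : kQ u v = k u.1 v.1 * S u v := by
    rw [hkQ, steinKernel_eq_sum_directionalSteinKernel hd hd2]
  have hS_symm (u v) : S u v = S v u :=
    Finset.sum_congr rfl fun _ _ => directionalSteinKernel_comm hl_symm hd hd2 _ _ _
  have hS_pd : IsPosSemidefKernel S := IsPosSemidefKernel.sum _ fun _ _ =>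
    (IsPosSemidefKernel.directionalSteinKernel hl_pd hd hd2 _).comap _
  refine ⟨fun u v => by rw [hkQ_eq, hkQ_eq, hk_symm, hS_symm], fun n u c => ?_⟩
  simpa only [hkQ_eq] using
    (IsPosSemidefKernel.comap hk_pd Prod.fst).mul hS_pd (fun _ _ => hk_symm _ _) hS_symm n u c

/-- For conditional models `Q_{|z}` with C¹ strictly positive
densities `f_{Q_{|z}}` and scores `s_{Q_{|z}} = ∇_y log f_{Q_{|z}}`, a C² positive
definite real kernel `l` on `𝒴` and a positive definite real kernel `k` on `𝒵`,
the conditional Stein kernel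
`k_Q((z,y),(z',y')) = k(z,z')·[l(y,y') s_z(y)ᵀs_{z'}(y') + s_z(y)ᵀ∇_{y'}l + s_{z'}(y')ᵀ∇_y l + ∑ᵢ ∂²l/∂yᵢ∂y'ᵢ]`
is a positive definite kernel on `𝒵 × 𝒴`. -/
theorem stmt_11 {dy : ℕ} {𝒵 : Type*}
    (k : 𝒵 → 𝒵 → ℝ) (hk_symm : ∀ z z', k z z' = k z' z)
    (hk_pd : ∀ (n : ℕ) (z : Fin n → 𝒵) (c : Fin n → ℝ),
      0 ≤ ∑ i, ∑ j, c i * c j * k (z i) (z j))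
    (l : EuclideanSpace ℝ (Fin dy) → EuclideanSpace ℝ (Fin dy) → ℝ)
    (hl_smooth : ContDiff ℝ 2
      (fun p : EuclideanSpace ℝ (Fin dy) × EuclideanSpace ℝ (Fin dy) => l p.1 p.2))
    (hl_symm : ∀ y y', l y y' = l y' y)
    (hl_pd : ∀ (n : ℕ) (y : Fin n → EuclideanSpace ℝ (Fin dy)) (c : Fin n → ℝ),
      0 ≤ ∑ i, ∑ j, c i * c j * l (y i) (y j))
    (f : 𝒵 → EuclideanSpace ℝ (Fin dy) → ℝ)
    (hf_pos : ∀ z y, 0 < f z y) (hf_diff : ∀ z, ContDiff ℝ 1 (f z))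
    (s : 𝒵 → EuclideanSpace ℝ (Fin dy) → EuclideanSpace ℝ (Fin dy))
    (hs : ∀ z y, HasGradientAt (fun u => Real.log (f z u)) (s z y) y)
    (kQ : 𝒵 × EuclideanSpace ℝ (Fin dy) → 𝒵 × EuclideanSpace ℝ (Fin dy) → ℝ)
    (hkQ : ∀ z y z' y', kQ (z, y) (z', y') =
      k z z' * (l y y' * inner ℝ (s z y) (s z' y')
        + inner ℝ (s z y) (gradSnd l y y')
        + inner ℝ (s z' y') (gradFst l y y')
        + crossDeriv l y y')) :
    (∀ u v, kQ u v = kQ v u) ∧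
    (∀ (n : ℕ) (u : Fin n → 𝒵 × EuclideanSpace ℝ (Fin dy)) (c : Fin n → ℝ),
      0 ≤ ∑ i, ∑ j, c i * c j * kQ (u i) (u j)) :=
  stmt_11_general k hk_symm hk_pd l hl_smooth hl_symm hl_pd s kQ hkQ

end
end

section
/- (Stein identity) Let q be a C¹ strictly positive probability density on ℝ^d vanishing at infinity together with l(y,·)q(y), and l a C¹ bounded kernel with bounded derivatives. Then E_{y~q}[ l(y,·) ∇_y log q(y) + ∇_y l(y,·) ] = 0 in the product RKHS F_l^d. -/
open MeasureTheory
open scoped RealInnerProductSpace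

/-! Writing `∇ log q = ∇q / q`, the Stein feature weighted by `q` is the gradient of the
integrable function `l(·, y') q`: `q (l(·, y') ∇log q + ∇_y l(·, y')) = ∇(l(·, y') q)`.
Its expectation under `q` is therefore the Lebesgue integral of a gradient, which vanishes by
integration by parts against the constant function `1`. -/

section Gradient

variable {E : Type*} [NormedAddCommGroup E] [InnerProductSpace ℝ E] [CompleteSpace E]

theorem HasGradientAt.mul {f g : E → ℝ} {f' g' x : E} (hf : HasGradientAt f f' x)
    (hg : HasGradientAt g g' x) :
    HasGradientAt (fun y => f y * g y) (f x • g' + g x • f') x := by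
  rw [hasGradientAt_iff_hasFDerivAt] at hf hg ⊢
  simpa only [map_add, map_smul] using hf.fun_mul hg

theorem gradient_eq_smul_of_hasGradientAt_log {q : E → ℝ} {s x : E} (hq : q x ≠ 0)
    (hd : DifferentiableAt ℝ q x) (hs : HasGradientAt (fun y => Real.log (q y)) s x) :
    gradient q x = q x • s := by
  have hlog : HasFDerivAt (fun y => Real.log (q y)) ((q x)⁻¹ • fderiv ℝ q x) x :=
    (Real.hasDerivAt_log hq).comp_hasFDerivAt x hd.hasFDerivAt
  apply (InnerProductSpace.toDual ℝ E).injective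
  rw [toDual_gradient, map_smul, hs.hasFDerivAt.unique hlog, smul_inv_smul₀ hq]

end Gradient

section Integral

variable {E F : Type*} [NormedAddCommGroup E] [InnerProductSpace ℝ E] [FiniteDimensional ℝ E]
  [MeasurableSpace E] [BorelSpace E] {μ : Measure E} [μ.IsAddHaarMeasure]
  [NormedAddCommGroup F] [NormedSpace ℝ F]

theorem integral_fderiv_apply_eq_zero_of_integrable {f : E → F} {v : E} (hf : Integrable f μ)
    (hf' : Integrable (fun x => fderiv ℝ f x v) μ) (hd : Differentiable ℝ f) :
    ∫ x, fderiv ℝ f x v ∂μ = 0 := by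
  simpa using integral_smul_fderiv_eq_neg_fderiv_smul_of_integrable (μ := μ)
    (f := fun _ => (1 : ℝ)) (g := f) (v := v) (by simp) (by simpa using hf') (by simpa using hf)
    (fun x _ => differentiableAt_const _) (fun x _ => hd x)

theorem integral_gradient_eq_zero_of_integrable {f : E → ℝ} (hf : Integrable f μ)
    (hf' : Integrable (gradient f) μ) (hd : Differentiable ℝ f) :
    ∫ x, gradient f x ∂μ = 0 := by
  set V := ∫ x, gradient f x ∂μ
  have hV : ⟪V, V⟫ = 0 := by
    have h_inner (x : E) : ⟪V, gradient f x⟫ = fderiv ℝ f x V := by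
      rw [real_inner_comm, inner_gradient_left]
    rw [← integral_inner hf' V]
    simp_rw [h_inner]
    refine integral_fderiv_apply_eq_zero_of_integrable hf ?_ hd
    simpa only [innerSL_apply_apply, h_inner] using (innerSL ℝ V).integrable_comp hf'
  exact inner_self_eq_zero.mp hV

end Integral

section WithDensity

variable {α E : Type*} [MeasurableSpace α] {μ : Measure α} [NormedAddCommGroup E]
  [NormedSpace ℝ E] {q : α → ℝ}

theorem integral_withDensity_ofReal_eq_integral_smul (hq : Measurable q) (hq0 : ∀ x, 0 ≤ q x)
    (g : α → E) :
    ∫ x, g x ∂μ.withDensity (fun x => ENNReal.ofReal (q x)) = ∫ x, q x • g x ∂μ := by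
  rw [integral_withDensity_eq_integral_toReal_smul hq.ennreal_ofReal
    (.of_forall fun _ => ENNReal.ofReal_lt_top)]
  simp_rw [ENNReal.toReal_ofReal (hq0 _)]

theorem integrable_withDensity_ofReal_iff_integrable_smul (hq : Measurable q)
    (hq0 : ∀ x, 0 ≤ q x) {g : α → E} :
    Integrable g (μ.withDensity fun x => ENNReal.ofReal (q x)) ↔
      Integrable (fun x => q x • g x) μ := by
  rw [integrable_withDensity_iff_integrable_smul' hq.ennreal_ofReal
    (.of_forall fun _ => ENNReal.ofReal_lt_top)]
  simp_rw [ENNReal.toReal_ofReal (hq0 _)]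

end WithDensity

theorem stmt_12_general {d : ℕ}
    (q : EuclideanSpace ℝ (Fin d) → ℝ)
    (hq_pos : ∀ x, 0 < q x) (hq_diff : ContDiff ℝ 1 q)
    (hq_norm : ∫ x, q x = 1)
    (sq : EuclideanSpace ℝ (Fin d) → EuclideanSpace ℝ (Fin d))
    (hsq : ∀ x, HasGradientAt (fun y => Real.log (q y)) (sq x) x)
    (l : EuclideanSpace ℝ (Fin d) → EuclideanSpace ℝ (Fin d) → ℝ)
    (hl_smooth : ContDiff ℝ 1
      (fun p : EuclideanSpace ℝ (Fin d) × EuclideanSpace ℝ (Fin d) => l p.1 p.2))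
    (hl_bdd : ∃ C, ∀ y y', |l y y'| ≤ C)
    (hint : ∀ y', Integrable
      (fun y => l y y' • sq y + gradient (fun u => l u y') y)
      (volume.withDensity fun x => ENNReal.ofReal (q x))) :
    ∀ y', (∫ y, (l y y' • sq y + gradient (fun u => l u y') y)
      ∂(volume.withDensity fun x => ENNReal.ofReal (q x))) = 0 := by
  intro y'
  set L := fun u => l u y'
  have hL : Differentiable ℝ L :=
    (hl_smooth.comp (contDiff_id.prodMk contDiff_const)).differentiable one_ne_zero
  have hq : Differentiable ℝ q := hq_diff.differentiable one_ne_zero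
  have hq_meas : Measurable q := hq.continuous.measurable
  have hq0 : ∀ x, 0 ≤ q x := fun x => (hq_pos x).le
  have hgrad : gradient (fun u => L u * q u) = fun y => q y • (L y • sq y + gradient L y) := by
    funext y
    rw [((hL y).hasGradientAt.mul (hq y).hasGradientAt).gradient,
      gradient_eq_smul_of_hasGradientAt_log (hq_pos y).ne' (hq y) (hsq y)]
    module
  rw [integral_withDensity_ofReal_eq_integral_smul hq_meas hq0, ← hgrad]
  obtain ⟨C, hC⟩ := hl_bdd
  refine integral_gradient_eq_zero_of_integrable ?_ ?_ (hL.mul hq)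
  · -- `∫ q = 1 ≠ 0` forces `q` to be integrable: the Bochner integral of a non-integrable map is `0`.
    exact (Integrable.of_integral_ne_zero (by simp [hq_norm])).bdd_mul
      hL.continuous.aestronglyMeasurable (.of_forall fun y => hC y y')
  · rw [hgrad]
    exact (integrable_withDensity_ofReal_iff_integrable_smul hq_meas hq0).mp (hint y')

/-- Stein identity: For a C¹ strictly positive probability density
`q` on `ℝ^d` such that `l(y,·) q(y)` vanishes at infinity, and a C¹ bounded
kernel `l` with bounded derivatives, the kernelized Stein feature has zero mean:
`E_{y∼q}[ l(y,·) ∇log q(y) + ∇_y l(y,·) ] = 0` (in `F_l^d`, i.e. tested at every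
point `y'`). -/
theorem stmt_12 {d : ℕ}
    (q : EuclideanSpace ℝ (Fin d) → ℝ)
    (hq_pos : ∀ x, 0 < q x) (hq_diff : ContDiff ℝ 1 q)
    (hq_norm : ∫ x, q x = 1)
    (sq : EuclideanSpace ℝ (Fin d) → EuclideanSpace ℝ (Fin d))
    (hsq : ∀ x, HasGradientAt (fun y => Real.log (q y)) (sq x) x)
    (l : EuclideanSpace ℝ (Fin d) → EuclideanSpace ℝ (Fin d) → ℝ)
    (hl_smooth : ContDiff ℝ 1
      (fun p : EuclideanSpace ℝ (Fin d) × EuclideanSpace ℝ (Fin d) => l p.1 p.2))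
    (hl_symm : ∀ y y', l y y' = l y' y)
    (hl_pd : ∀ (n : ℕ) (y : Fin n → EuclideanSpace ℝ (Fin d)) (c : Fin n → ℝ),
      0 ≤ ∑ i, ∑ j, c i * c j * l (y i) (y j))
    (hl_bdd : ∃ C, ∀ y y', |l y y'| ≤ C)
    (hl_grad_bdd : ∃ C, ∀ y y', ‖gradient (fun u => l u y') y‖ ≤ C)
    (hvanish : ∀ y', Filter.Tendsto (fun y => l y y' * q y) (Filter.cocompact _) (nhds 0))
    (hint : ∀ y', Integrable
      (fun y => l y y' • sq y + gradient (fun u => l u y') y)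
      (volume.withDensity fun x => ENNReal.ofReal (q x))) :
    ∀ y', (∫ y, (l y y' • sq y + gradient (fun u => l u y') y)
      ∂(volume.withDensity fun x => ENNReal.ofReal (q x))) = 0 :=
  stmt_12_general q hq_pos hq_diff hq_norm sq hsq l hl_smooth hl_bdd hint
end
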